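/- arXiv:2603.28266 — 2 statements merged into one kernel-verified Lean document; each statement's English description precedes it below -/
import Mathlib

section
/- Let m be any monomial of degree k in n variables over 𝔽₂ (i.e., m(x) = ∏_{i∈I} x_i for some k-subset I of [n]). The number of k-dimensional linear subspaces U of 𝔽₂^n with ∑_{x∈U} m(x) ≠ 0 equals 2^{k(n−k)}. -/
/-- Sum of a function over a (finite) set of points. -/
noncomputable def setSum {α β : Type*} [Fintype α] [AddCommMonoid β]
    (S : Set α) (F : α → β) : β :=
  ∑ x ∈ (Set.toFinite S).toFinset, F x

/-!
Let `π : 𝔽₂ⁿ → 𝔽₂^I` restrict to the coordinates in `I`. On a `k`-dimensional subspace `U`, either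
`π|_U` has a nonzero kernel vector `u`, and then translation by `u` pairs off the terms of the sum
(the monomial only sees coordinates in `I`), or `π|_U` is an isomorphism onto `𝔽₂^I`, and then the
sum is `∑_{y ∈ 𝔽₂^I} ∏ yᵢ = (0 + 1)^k = 1`. So the subspaces counted are those mapped isomorphically
by `π`, i.e. the ranges of the right inverses of `π`; these form a torsor under
`Hom(𝔽₂^I, ker π)`, of dimension `k (n - k)`.
-/

open Module Function

namespace LinearMap

section

variable {R V W : Type*} [Ring R] [AddCommGroup V] [Module R V] [AddCommGroup W] [Module R W]
  (f : V →ₗ[R] W)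

theorem bijective_comp_subtype_range {g : W →ₗ[R] V} (hg : f ∘ₗ g = id) :
    Bijective (f ∘ₗ (range g).subtype) := by
  refine ⟨fun ⟨x, hx⟩ ⟨y, hy⟩ hxy => ?_, fun y => ⟨⟨g y, mem_range_self g y⟩, congr($hg y)⟩⟩
  obtain ⟨a, rfl⟩ := mem_range.mp hx
  obtain ⟨b, rfl⟩ := mem_range.mp hy
  have hab : a = b := by simpa [← comp_apply, hg] using hxy
  simp [hab]

noncomputable def submoduleBijectiveEquivRightInverse :
    {U : Submodule R V // Bijective (f ∘ₗ U.subtype)} ≃ {g : W →ₗ[R] V // f ∘ₗ g = id} where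
  toFun U := ⟨U.1.subtype ∘ₗ (LinearEquiv.ofBijective _ U.2).symm.toLinearMap,
    ext fun y => (LinearEquiv.ofBijective _ U.2).apply_symm_apply y⟩
  invFun g := ⟨range g.1, bijective_comp_subtype_range f g.2⟩
  left_inv U := by
    ext1
    simp only [range_comp, LinearEquiv.range, Submodule.map_top, Submodule.range_subtype]
  right_inv g := by
    ext y
    have key : (LinearEquiv.ofBijective _ (bijective_comp_subtype_range f g.2)).symm y =
        ⟨g.1 y, mem_range_self _ y⟩ := by
      rw [LinearEquiv.symm_apply_eq]
      exact congr($(g.2) y).symm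
    simp [key]

def rightInverseEquivKer {s : W →ₗ[R] V} (hs : f ∘ₗ s = id) :
    {g : W →ₗ[R] V // f ∘ₗ g = id} ≃ (W →ₗ[R] ker f) where
  toFun g := codRestrict (ker f) (g.1 - s) fun y => by
    simp [mem_ker, ← comp_apply, g.2, hs]
  invFun h := ⟨s + (ker f).subtype ∘ₗ h, by
    ext y; simp [comp_add, hs]⟩
  left_inv g := by ext; simp
  right_inv h := by ext; simp

end

theorem natCard_submoduleBijective {K V W : Type*} [Field K] [Finite K] [AddCommGroup V]
    [Module K V] [FiniteDimensional K V] [AddCommGroup W] [Module K W] (f : V →ₗ[K] W)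
    (hf : Surjective f) :
    Nat.card {U : Submodule K V // Bijective (f ∘ₗ U.subtype)} =
      Nat.card K ^ (finrank K W * (finrank K V - finrank K W)) := by
  obtain ⟨s, hs⟩ := f.exists_rightInverse_of_surjective (range_eq_top.mpr hf)
  have : FiniteDimensional K W := Module.Finite.of_surjective f hf
  have hker : finrank K (ker f) = finrank K V - finrank K W := by
    have := f.finrank_range_add_finrank_ker
    rw [range_eq_top.mpr hf, finrank_top] at this
    omega
  rw [Nat.card_congr ((submoduleBijectiveEquivRightInverse f).trans (rightInverseEquivKer f hs)),
    natCard_eq_pow_finrank (K := K), finrank_linearMap, hker]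

end LinearMap

theorem setSum_eq_sum {α β : Type*} [Fintype α] [AddCommMonoid β] (S : Set α) [Fintype S]
    (F : α → β) : setSum S F = ∑ x : S, F x :=
  Finset.sum_subtype _ (fun _ => Set.Finite.mem_toFinset _) F

section CharTwo

variable {U W R : Type*} [AddCommGroup U] [Module (ZMod 2) U] [Fintype U]
  [AddCommGroup W] [Module (ZMod 2) W] [Ring R] [CharP R 2]

/-- Translation by a nonzero vector of `ker φ` pairs off the terms. -/
theorem sum_comp_eq_zero_of_not_injective {φ : U →ₗ[ZMod 2] W} (hφ : ¬ Injective φ)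
    (G : W → R) : ∑ x, G (φ x) = 0 := by
  obtain ⟨u, hu, hu0⟩ : ∃ u, φ u = 0 ∧ u ≠ 0 := by
    simpa [injective_iff_map_eq_zero] using hφ
  refine Finset.sum_involution (fun x _ => x + u) (fun x _ => ?_) (fun x _ _ => by simpa)
    (fun _ _ => Finset.mem_univ _) (fun x _ => ?_)
  · rw [map_add, hu, add_zero, CharTwo.add_self_eq_zero]
  · rw [add_assoc, ← two_smul (ZMod 2) u, show (2 : ZMod 2) = 0 from rfl, zero_smul, add_zero]

end CharTwo

theorem ZMod.sum_prod_eq_one (σ : Type*) [Fintype σ] [DecidableEq σ] :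
    ∑ y : σ → ZMod 2, ∏ i, y i = 1 := by
  calc ∑ y : σ → ZMod 2, ∏ i, y i = ∏ _ : σ, ∑ a : ZMod 2, a :=
        (Fintype.prod_sum fun _ a => a).symm
    _ = 1 := by simp [show ∑ a : ZMod 2, a = 1 from rfl]

theorem setSum_prod_ne_zero_iff {ι : Type*} [Fintype ι] [DecidableEq ι] (I : Finset ι)
    (U : Submodule (ZMod 2) (ι → ZMod 2)) :
    finrank (ZMod 2) U = I.card ∧ setSum (U : Set (ι → ZMod 2)) (fun x => ∏ i ∈ I, x i) ≠ 0 ↔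
      Bijective (LinearMap.funLeft (ZMod 2) (ZMod 2) ((↑) : I → ι) ∘ₗ U.subtype) := by
  classical
  set φ := LinearMap.funLeft (ZMod 2) (ZMod 2) ((↑) : I → ι) ∘ₗ U.subtype
  have hsum : setSum (U : Set (ι → ZMod 2)) (fun x => ∏ i ∈ I, x i) = ∑ x : U, ∏ i, φ x i := by
    rw [setSum_eq_sum]
    exact Fintype.sum_congr _ _ fun x => (Finset.prod_coe_sort I _).symm
  have hrank : finrank (ZMod 2) (I → ZMod 2) = I.card := by simp
  constructor
  · rintro ⟨hdim, hne⟩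
    have hinj : Injective φ := by
      by_contra h
      exact hne (hsum.trans (sum_comp_eq_zero_of_not_injective h _))
    exact ⟨hinj, (LinearMap.injective_iff_surjective_of_finrank_eq_finrank
      (hdim.trans hrank.symm)).mp hinj⟩
  · intro hφ
    refine ⟨(LinearEquiv.ofBijective φ hφ).finrank_eq.trans hrank, ?_⟩
    rw [hsum, Fintype.sum_bijective φ hφ _ _ fun _ => rfl, ZMod.sum_prod_eq_one]
    exact one_ne_zero

theorem stmt_11 (n k : ℕ) (I : Finset (Fin n)) (hI : I.card = k) :
    Set.ncard {U : Submodule (ZMod 2) (Fin n → ZMod 2) |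
        Module.finrank (ZMod 2) U = k ∧
        setSum (U : Set (Fin n → ZMod 2)) (fun x => ∏ i ∈ I, x i) ≠ 0} =
      2 ^ (k * (n - k)) := by
  subst hI
  simp_rw [setSum_prod_ne_zero_iff, ← Nat.card_coe_set_eq, Set.coe_ofPred]
  rw [LinearMap.natCard_submoduleBijective _
    (LinearMap.funLeft_surjective_of_injective _ _ _ Subtype.val_injective)]
  simp
end

section
/- Let f : 𝔽₂^n → 𝔽₂ be a Boolean function. Then the number of nonvanishing 2-flats of f satisfies |N_{A,2}(f)| ≤ 2^{2n−4}(2^n − 1)/3, with equality if and only if f is bent (i.e., all Walsh coefficients of f have absolute value 2^{n/2}). -/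
def IsFlat (n k : ℕ) (A : Set (Fin n → ZMod 2)) : Prop :=
  ∃ (U : Submodule (ZMod 2) (Fin n → ZMod 2)) (a : Fin n → ZMod 2),
    Module.finrank (ZMod 2) U = k ∧ A = (fun x => x + a) '' (U : Set (Fin n → ZMod 2))

def walsh (n : ℕ) (f : (Fin n → ZMod 2) → ZMod 2) (a : Fin n → ZMod 2) : ℤ :=
  ∑ x : Fin n → ZMod 2, (-1 : ℤ) ^ (f x + ∑ i, x i * a i).val

open Finset

lemma card_filter_pairwise_ne_triple {α : Type*} [DecidableEq α] (s : Finset α) :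
    #{p ∈ s ×ˢ s ×ˢ s | p.1 ≠ p.2.1 ∧ p.1 ≠ p.2.2 ∧ p.2.1 ≠ p.2.2} =
      (#s).descFactorial 3 := by
  let toTriple : (Fin 3 ↪ s) → α × α × α := fun e => (e 0, e 1, e 2)
  have himage : univ.image toTriple =
      {p ∈ s ×ˢ s ×ˢ s | p.1 ≠ p.2.1 ∧ p.1 ≠ p.2.2 ∧ p.2.1 ≠ p.2.2} := by
    ext ⟨x, y, z⟩
    simp only [mem_image, mem_univ, true_and, mem_filter, mem_product, toTriple, Prod.mk.injEq]
    constructor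
    · rintro ⟨e, rfl, rfl, rfl⟩
      refine ⟨⟨(e 0).2, (e 1).2, (e 2).2⟩, ?_, ?_, ?_⟩ <;>
        exact fun h => absurd (e.injective (Subtype.ext h)) (by decide)
    · rintro ⟨⟨hx, hy, hz⟩, hxy, hxz, hyz⟩
      refine ⟨⟨![⟨x, hx⟩, ⟨y, hy⟩, ⟨z, hz⟩], fun i j h => ?_⟩, rfl, rfl, rfl⟩
      fin_cases i <;> fin_cases j <;> simp_all [eq_comm]
  have hinj : Function.Injective toTriple := fun e₁ e₂ h => by
    simp only [toTriple, Prod.mk.injEq] at h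
    ext i
    fin_cases i
    exacts [h.1, h.2.1, h.2.2]
  rw [← himage, card_image_of_injective _ hinj, card_univ, Fintype.card_embedding_eq,
    Fintype.card_coe, Fintype.card_fin]

lemma Set.ncard_setOf_eq_card_filter {α : Type*} [Fintype α] (P : Set α → Prop)
    [DecidablePred fun s : Finset α => P ↑s] :
    {A : Set α | P A}.ncard = #{s : Finset α | P ↑s} := by
  classical
  have himage : {A : Set α | P A} =
      (↑) '' (↑({s : Finset α | P ↑s} : Finset (Finset α)) : Set (Finset α)) := by
    ext A
    constructor
    · exact fun h => ⟨A.toFinset, by simpa using h, by simp⟩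
    · rintro ⟨s, hs, rfl⟩
      simpa using hs
  rw [himage, Set.ncard_image_of_injective _ coe_injective, Set.ncard_coe_finset]

lemma setSum_coe {α β : Type*} [Fintype α] [AddCommMonoid β] (s : Finset α) (F : α → β) :
    setSum (↑s : Set α) F = ∑ x ∈ s, F x := by
  simp [setSum]

lemma ncard_image_add_right {G : Type*} [AddGroup G] (U : Set G) (a : G) :
    ((fun x => x + a) '' U).ncard = U.ncard :=
  Set.ncard_image_of_injective _ (add_left_injective a)

section CharTwo

variable {G : Type*} [AddCommGroup G] [Module (ZMod 2) G] {x y z : G}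

lemma ZModModule.add_eq_zero_iff_eq : x + y = 0 ↔ x = y := by
  rw [add_eq_zero_iff_eq_neg, ZModModule.neg_eq_self]

lemma ZModModule.add_add_ne_left (hyz : y ≠ z) : x + y + z ≠ x := fun h =>
  hyz (add_eq_zero_iff_eq.1 (by rwa [add_assoc, add_eq_left] at h))

lemma ZModModule.add_add_ne_middle (hxz : x ≠ z) : x + y + z ≠ y := fun h =>
  hxz (add_eq_zero_iff_eq.1 (by rwa [add_right_comm, add_eq_right] at h))

lemma ZModModule.add_add_ne_right (hxy : x ≠ y) : x + y + z ≠ z := fun h =>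
  hxy (add_eq_zero_iff_eq.1 (by rwa [add_eq_right] at h))

lemma Submodule.coe_span_pair_zmod_two (u v : G) :
    (span (ZMod 2) {u, v} : Set G) = {0, u, v, u + v} := by
  have hcases : ∀ t : ZMod 2, t = 0 ∨ t = 1 := by decide
  ext w
  simp only [SetLike.mem_coe, mem_span_pair, Set.mem_insert_iff, Set.mem_singleton_iff]
  constructor
  · rintro ⟨a, b, rfl⟩
    rcases hcases a with rfl | rfl <;> rcases hcases b with rfl | rfl <;> simp
  · rintro (rfl | rfl | rfl | rfl)
    exacts [⟨0, 0, by simp⟩, ⟨1, 0, by simp⟩, ⟨0, 1, by simp⟩, ⟨1, 1, by simp⟩]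

lemma Submodule.ncard_eq_two_pow_finrank [Finite G] (U : Submodule (ZMod 2) G) :
    (U : Set G).ncard = 2 ^ Module.finrank (ZMod 2) U := by
  rw [← Nat.card_coe_set_eq, SetLike.coe_sort_coe, Module.natCard_eq_pow_finrank (K := ZMod 2),
    Nat.card_zmod]

end CharTwo

def signChar : AddChar (ZMod 2) ℤ := AddChar.zmodChar 2 (ζ := -1) (by norm_num)

lemma signChar_one : signChar 1 = -1 := rfl

lemma signChar_mul_self (u : ZMod 2) : signChar u * signChar u = 1 := by
  rw [← AddChar.map_add_eq_mul, ZModModule.add_self, AddChar.map_zero_eq_one]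

lemma sum_signChar {ι : Type*} [Fintype ι] (g : ι → ZMod 2) :
    ∑ i, signChar (g i) = Fintype.card ι - 2 * #{i | g i ≠ 0} := by
  have h : ∀ u : ZMod 2, signChar u = 1 - 2 * if u ≠ 0 then 1 else 0 := by decide
  simp only [h, sum_sub_distrib, ← mul_sum, sum_boole, sum_const, card_univ, nsmul_eq_mul,
    mul_one]

section

variable {n : ℕ}

local notation:max "𝔽₂^" n:max => Fin n → ZMod 2

lemma sum_signChar_dotProduct (u : 𝔽₂^n) :
    ∑ a : 𝔽₂^n, signChar (u ⬝ᵥ a) = if u = 0 then 2 ^ n else 0 := by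
  split_ifs with hu
  · simp [hu]
  obtain ⟨i, hi⟩ := Function.ne_iff.1 hu
  have hui : u i = 1 := (by decide : ∀ t : ZMod 2, t ≠ 0 → t = 1) _ hi
  have hflip : ∀ a : 𝔽₂^n, signChar (u ⬝ᵥ (a + Pi.single i 1)) = -signChar (u ⬝ᵥ a) := by
    intro a
    rw [dotProduct_add, dotProduct_single, hui, mul_one, AddChar.map_add_eq_mul, signChar_one,
      mul_neg_one]
  have hshift :=
    Equiv.sum_comp (Equiv.addRight (Pi.single i 1 : 𝔽₂^n)) (fun a => signChar (u ⬝ᵥ a))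
  simp only [Equiv.coe_addRight, hflip, sum_neg_distrib] at hshift
  linarith

def walshHadamard (F : 𝔽₂^n → ℤ) (a : 𝔽₂^n) : ℤ := ∑ x, F x * signChar (x ⬝ᵥ a)

def correlation (F G : 𝔽₂^n → ℤ) (d : 𝔽₂^n) : ℤ := ∑ x, F x * G (x + d)

lemma walsh_eq_walshHadamard (f : 𝔽₂^n → ZMod 2) :
    walsh n f = walshHadamard (fun x => signChar (f x)) := by
  ext a
  simp only [walsh, walshHadamard, ← AddChar.map_add_eq_mul]
  rfl

lemma walshHadamard_mul_eq_sum (F G : 𝔽₂^n → ℤ) (a : 𝔽₂^n) :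
    walshHadamard F a * walshHadamard G a =
      ∑ x, ∑ y, F x * G y * signChar ((x + y) ⬝ᵥ a) := by
  simp only [walshHadamard, sum_mul_sum, add_dotProduct, AddChar.map_add_eq_mul]
  exact sum_congr rfl fun _ _ => sum_congr rfl fun _ _ => by ring

lemma walshHadamard_mul (F G : 𝔽₂^n → ℤ) (a : 𝔽₂^n) :
    walshHadamard F a * walshHadamard G a = walshHadamard (correlation F G) a := by
  rw [walshHadamard_mul_eq_sum, walshHadamard]
  simp only [correlation, sum_mul]
  rw [sum_comm (s := univ) (t := univ) (f := fun d x => F x * G (x + d) * signChar (d ⬝ᵥ a))]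
  refine sum_congr rfl fun x _ => ?_
  rw [← Equiv.sum_comp (Equiv.addLeft x)]
  simp [← add_assoc, ZModModule.add_self]

lemma sum_walshHadamard_mul (F G : 𝔽₂^n → ℤ) :
    ∑ a, walshHadamard F a * walshHadamard G a = 2 ^ n * ∑ x, F x * G x := by
  calc ∑ a, walshHadamard F a * walshHadamard G a
      = ∑ x, ∑ y, F x * G y * ∑ a, signChar ((x + y) ⬝ᵥ a) := by
        simp only [walshHadamard_mul_eq_sum, mul_sum]
        rw [sum_comm]
        exact sum_congr rfl fun _ _ => sum_comm
    _ = ∑ x, 2 ^ n * (F x * G x) := by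
        simp only [sum_signChar_dotProduct, ZModModule.add_eq_zero_iff_eq, mul_ite, mul_zero,
          sum_ite_eq, mem_univ, if_true]
        exact sum_congr rfl fun _ _ => by ring
    _ = 2 ^ n * ∑ x, F x * G x := by rw [mul_sum]


lemma IsFlat.ncard {k : ℕ} {A : Set 𝔽₂^n} (hA : IsFlat n k A) : A.ncard = 2 ^ k := by
  obtain ⟨U, a, rfl, rfl⟩ := hA
  rw [ncard_image_add_right, Submodule.ncard_eq_two_pow_finrank]

lemma IsFlat.add_add_mem {k : ℕ} {A : Set 𝔽₂^n} (hA : IsFlat n k A) {x y z : 𝔽₂^n}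
    (hx : x ∈ A) (hy : y ∈ A) (hz : z ∈ A) : x + y + z ∈ A := by
  obtain ⟨U, a, -, rfl⟩ := hA
  obtain ⟨u, hu, rfl⟩ := hx
  obtain ⟨v, hv, rfl⟩ := hy
  obtain ⟨w, hw, rfl⟩ := hz
  refine ⟨u + v + w, U.add_mem (U.add_mem hu hv) hw, ?_⟩
  show u + v + w + a = u + a + (v + a) + (w + a)
  rw [← add_zero (u + v + w + a), ← ZModModule.add_self a]
  abel

def quad (x y z : 𝔽₂^n) : Finset 𝔽₂^n := {x, y, z, x + y + z}

variable {x y z : 𝔽₂^n}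

lemma card_quad (hxy : x ≠ y) (hxz : x ≠ z) (hyz : y ≠ z) : #(quad x y z) = 4 := by
  have := ZModModule.add_add_ne_left (x := x) hyz
  have := ZModModule.add_add_ne_middle (y := y) hxz
  have := ZModModule.add_add_ne_right (z := z) hxy
  rw [quad, card_insert_of_notMem (by simp [*, Ne.symm]),
    card_insert_of_notMem (by simp [*, Ne.symm]), card_pair (by simp [*, Ne.symm])]

lemma isFlat_quad (hxy : x ≠ y) (hxz : x ≠ z) (hyz : y ≠ z) : IsFlat n 2 ↑(quad x y z) := by
  have hquad : (↑(quad x y z) : Set 𝔽₂^n) =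
      (fun w => w + x) '' (Submodule.span (ZMod 2) {x + y, x + z} : Set 𝔽₂^n) := by
    have hy : x + y + x = y := by linear_combination ZModModule.add_self x
    have hz : x + z + x = z := by linear_combination ZModModule.add_self x
    have hyz : x + y + (x + z) + x = x + y + z := by linear_combination ZModModule.add_self x
    simp only [quad, coe_insert, coe_singleton, Submodule.coe_span_pair_zmod_two,
      Set.image_insert_eq, Set.image_singleton, zero_add, hy, hz, hyz]
  refine ⟨_, x, Nat.pow_right_injective le_rfl ?_, hquad⟩
  dsimp only
  rw [← Submodule.ncard_eq_two_pow_finrank, ← ncard_image_add_right _ x, ← hquad,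
    Set.ncard_coe_finset, card_quad hxy hxz hyz]

lemma IsFlat.quad_eq {A : Finset 𝔽₂^n} (hA : IsFlat n 2 ↑A) (hx : x ∈ A) (hy : y ∈ A)
    (hz : z ∈ A) (hxy : x ≠ y) (hxz : x ≠ z) (hyz : y ≠ z) : quad x y z = A := by
  have hsum : x + y + z ∈ A := hA.add_add_mem (mem_coe.2 hx) (mem_coe.2 hy) (mem_coe.2 hz)
  refine eq_of_subset_of_card_le (by simp [quad, insert_subset_iff, hx, hy, hz, hsum]) ?_
  rw [card_quad hxy hxz hyz, ← Set.ncard_coe_finset, hA.ncard]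
  rfl

variable (f : 𝔽₂^n → ZMod 2)

def quadSum (x y z : 𝔽₂^n) : ZMod 2 := f x + f y + f z + f (x + y + z)

lemma pairwise_ne_of_quadSum_ne_zero (h : quadSum f x y z ≠ 0) : x ≠ y ∧ x ≠ z ∧ y ≠ z := by
  refine ⟨?_, ?_, ?_⟩ <;> rintro rfl <;> apply h <;> unfold quadSum
  · rw [ZModModule.add_self x, zero_add]
    grind
  · rw [show x + y + x = y by linear_combination ZModModule.add_self x]
    grind
  · rw [add_assoc x, ZModModule.add_self y, add_zero]
    grind

lemma setSum_quad (hxy : x ≠ y) (hxz : x ≠ z) (hyz : y ≠ z) :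
    setSum ↑(quad x y z) f = quadSum f x y z := by
  have := ZModModule.add_add_ne_left (x := x) hyz
  have := ZModModule.add_add_ne_middle (y := y) hxz
  have := ZModModule.add_add_ne_right (z := z) hxy
  rw [setSum_coe, quad, sum_insert (by simp [*, Ne.symm]), sum_insert (by simp [*, Ne.symm]),
    sum_pair (by simp [*, Ne.symm]), quadSum]
  ring

open Classical in
noncomputable def nonvanishingFlats : Finset (Finset 𝔽₂^n) :=
  {A | IsFlat n 2 ↑A ∧ setSum ↑A f ≠ 0}

lemma mem_nonvanishingFlats {A : Finset 𝔽₂^n} :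
    A ∈ nonvanishingFlats f ↔ IsFlat n 2 ↑A ∧ setSum ↑A f ≠ 0 := by
  classical
  rw [nonvanishingFlats, mem_filter, and_iff_right (mem_univ A)]

lemma quad_mem_nonvanishingFlats (h : quadSum f x y z ≠ 0) : quad x y z ∈ nonvanishingFlats f := by
  obtain ⟨hxy, hxz, hyz⟩ := pairwise_ne_of_quadSum_ne_zero f h
  exact (mem_nonvanishingFlats f).2 ⟨isFlat_quad hxy hxz hyz, by rwa [setSum_quad f hxy hxz hyz]⟩

lemma filter_quad_eq_of_mem_nonvanishingFlats {A : Finset 𝔽₂^n} (hA : A ∈ nonvanishingFlats f) :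
    ({p | quadSum f p.1 p.2.1 p.2.2 ≠ 0 ∧ quad p.1 p.2.1 p.2.2 = A} : Finset (𝔽₂^n × 𝔽₂^n × 𝔽₂^n)) =
      {p ∈ A ×ˢ A ×ˢ A | p.1 ≠ p.2.1 ∧ p.1 ≠ p.2.2 ∧ p.2.1 ≠ p.2.2} := by
  obtain ⟨hflat, hsum⟩ := (mem_nonvanishingFlats f).1 hA
  ext ⟨x, y, z⟩
  simp only [mem_filter, mem_univ, true_and, mem_product]
  constructor
  · rintro ⟨hp, rfl⟩
    obtain ⟨hxy, hxz, hyz⟩ := pairwise_ne_of_quadSum_ne_zero f hp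
    exact ⟨by simp [quad], hxy, hxz, hyz⟩
  · rintro ⟨⟨hx, hy, hz⟩, hxy, hxz, hyz⟩
    have hquad := hflat.quad_eq hx hy hz hxy hxz hyz
    exact ⟨by rwa [← setSum_quad f hxy hxz hyz, hquad], hquad⟩

lemma card_quadSum_ne_zero :
    #{p : 𝔽₂^n × 𝔽₂^n × 𝔽₂^n | quadSum f p.1 p.2.1 p.2.2 ≠ 0} = 24 * #(nonvanishingFlats f) := by
  have hfiber : ∀ A ∈ nonvanishingFlats f,
      #{p ∈ ({p : 𝔽₂^n × 𝔽₂^n × 𝔽₂^n | quadSum f p.1 p.2.1 p.2.2 ≠ 0} : Finset _) |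
        quad p.1 p.2.1 p.2.2 = A} = 24 := by
    intro A hA
    have hcard : #A = 4 := by
      rw [← Set.ncard_coe_finset, ((mem_nonvanishingFlats f).1 hA).1.ncard]
      rfl
    rw [filter_filter, filter_quad_eq_of_mem_nonvanishingFlats f hA,
      card_filter_pairwise_ne_triple, hcard]
    rfl
  rw [card_eq_sum_card_fiberwise fun p hp => quad_mem_nonvanishingFlats f (mem_filter.1 hp).2,
    sum_congr rfl hfiber, sum_const, smul_eq_mul, mul_comm]

lemma walsh_sq (a : 𝔽₂^n) :
    walsh n f a ^ 2 =
      walshHadamard (correlation (fun x => signChar (f x)) (fun x => signChar (f x))) a := by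
  rw [sq, walsh_eq_walshHadamard, walshHadamard_mul]

lemma sum_walsh_sq : ∑ a, walsh n f a ^ 2 = 2 ^ (2 * n) := by
  simp only [sq, walsh_eq_walshHadamard, sum_walshHadamard_mul, signChar_mul_self, sum_const,
    card_univ, Fintype.card_fun, ZMod.card, Fintype.card_fin]
  ring

lemma sum_walsh_pow_four :
    ∑ a, walsh n f a ^ 4 =
      2 ^ n * ∑ p : 𝔽₂^n × 𝔽₂^n × 𝔽₂^n, signChar (quadSum f p.1 p.2.1 p.2.2) := by
  simp only [show ∀ a, walsh n f a ^ 4 = walsh n f a ^ 2 * walsh n f a ^ 2 from fun a => by ring,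
    walsh_sq, sum_walshHadamard_mul, correlation, Fintype.sum_prod_type, sum_mul_sum]
  congr 1
  rw [sum_comm]
  refine sum_congr rfl fun x _ => ?_
  rw [sum_comm]
  refine sum_congr rfl fun y _ => ?_
  rw [← Equiv.sum_comp (Equiv.addLeft x)]
  refine sum_congr rfl fun z _ => ?_
  have hz : x + (x + z) = z := by linear_combination ZModModule.add_self x
  have hw : y + (x + z) = x + y + z := by ring
  rw [Equiv.coe_addLeft, hz, hw, ← AddChar.map_add_eq_mul, ← AddChar.map_add_eq_mul,
    ← AddChar.map_add_eq_mul, quadSum]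
  congr 1
  ring

lemma sum_sq_walsh_sq_sub :
    ∑ a, (walsh n f a ^ 2 - 2 ^ n) ^ 2 =
      2 ^ n * (2 ^ (3 * n) - 2 ^ (2 * n) - 48 * (#(nonvanishingFlats f) : ℤ)) := by
  have hexpand : ∑ a, (walsh n f a ^ 2 - 2 ^ n) ^ 2 =
      ∑ a, walsh n f a ^ 4 - 2 * 2 ^ n * ∑ a, walsh n f a ^ 2 + 2 ^ n * 2 ^ n * 2 ^ n := by
    simp only [sub_sq, ← pow_mul, sum_add_distrib, sum_sub_distrib, ← sum_mul, ← mul_sum,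
      sum_const, card_univ, Fintype.card_fun, ZMod.card, Fintype.card_fin, nsmul_eq_mul]
    push_cast
    ring
  rw [hexpand, sum_walsh_pow_four, sum_walsh_sq, sum_signChar, card_quadSum_ne_zero]
  simp only [Fintype.card_prod, Fintype.card_fun, ZMod.card, Fintype.card_fin]
  push_cast
  ring

end

theorem stmt_19 (n : ℕ) (f : (Fin n → ZMod 2) → ZMod 2) :
    (Set.ncard {A : Set (Fin n → ZMod 2) | IsFlat n 2 A ∧ setSum A f ≠ 0} : ℚ) ≤
      (2 : ℚ) ^ (2 * n) / 16 * ((2 : ℚ) ^ n - 1) / 3 ∧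
    ((Set.ncard {A : Set (Fin n → ZMod 2) | IsFlat n 2 A ∧ setSum A f ≠ 0} : ℚ) =
        (2 : ℚ) ^ (2 * n) / 16 * ((2 : ℚ) ^ n - 1) / 3 ↔
      ∀ a, (walsh n f a) ^ 2 = 2 ^ n) := by
  classical
  rw [Set.ncard_setOf_eq_card_filter]
  change ((#(nonvanishingFlats f) : ℕ) : ℚ) ≤ _ ∧ (((#(nonvanishingFlats f) : ℕ) : ℚ) = _ ↔ _)
  set bound : ℚ := (2 : ℚ) ^ (2 * n) / 16 * ((2 : ℚ) ^ n - 1) / 3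
  set D : ℤ := ∑ a, (walsh n f a ^ 2 - 2 ^ n) ^ 2 with hD_def
  have hdefect : (2 ^ n * 48 : ℚ) * (bound - #(nonvanishingFlats f)) = D := by
    rw [hD_def, sum_sq_walsh_sq_sub]
    push_cast
    ring
  have hpos : (0 : ℚ) < 2 ^ n * 48 := by positivity
  have hbent : D = 0 ↔ ∀ a, walsh n f a ^ 2 = 2 ^ n := by
    rw [hD_def, sum_eq_zero_iff_of_nonneg fun a _ => sq_nonneg _]
    simp [sub_eq_zero]
  constructor
  · have hD : (0 : ℚ) ≤ D := Int.cast_nonneg (sum_nonneg fun a _ => sq_nonneg _)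
    rw [← hdefect] at hD
    linarith [(mul_nonneg_iff_of_pos_left hpos).1 hD]
  · rw [← hbent, ← Int.cast_eq_zero (α := ℚ), ← hdefect, mul_eq_zero, sub_eq_zero]
    simp [hpos.ne', eq_comm]
end
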